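/- Let d_e ≥ 0 be a real parameter. Suppose ρ : [0,T] × T³ → ℝ is smooth and everywhere positive, V, B : [0,T] × T³ → ℝ³ are smooth, B* = B + d_e² ∇×(ρ⁻¹ ∇×B) satisfies ∇·B* = 0, and the inertial MHD equations hold: ∂_t V = −(∇×V)×V − ∇(h(ρ) + |V|²/2) + ρ⁻¹ (∇×B)×B* − d_e² ∇(|∇×B|²/(2ρ²)) for some smooth function h of ρ, and ∂_t B* = ∇×(V×B*) + d_e² ∇×(ρ⁻¹ (∇×B)×(∇×V)). Then the cross-helicity C′₂(t) = ∫_{T³} V·B* dx is constant in t. -/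

import Mathlib

open MeasureTheory Real
open scoped ContDiff

noncomputable section

abbrev V3 : Type := Fin 3 → ℝ

def dot (a b : V3) : ℝ := ∑ i, a i * b i

def cross (a b : V3) : V3 :=
  ![a 1 * b 2 - a 2 * b 1, a 2 * b 0 - a 0 * b 2, a 0 * b 1 - a 1 * b 0]

/-- Partial derivative `∂ᵢ f` of a scalar field. -/
def pd (i : Fin 3) (f : V3 → ℝ) (x : V3) : ℝ := fderiv ℝ f x (Pi.single i 1)

/-- Gradient of a scalar field. -/
def grad (f : V3 → ℝ) (x : V3) : V3 := fun i => pd i f x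

/-- Divergence of a vector field. -/
def vdiv (u : V3 → V3) (x : V3) : ℝ := ∑ i, pd i (fun y => u y i) x

/-- Curl of a vector field. -/
def curl (u : V3 → V3) (x : V3) : V3 :=
  ![pd 1 (fun y => u y 2) x - pd 2 (fun y => u y 1) x,
    pd 2 (fun y => u y 0) x - pd 0 (fun y => u y 2) x,
    pd 0 (fun y => u y 1) x - pd 1 (fun y => u y 0) x]

/-- Directional derivative `(a·∇)u` of a vector field `u` along the vector `a`. -/
def dirDeriv (a : V3) (u : V3 → V3) (x : V3) : V3 :=
  fun i => ∑ j, a j * pd j (fun y => u y i) x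

/-- The fundamental cell of the flat torus `T³ = ℝ³/(2πℤ)³`. -/
def T3 : Set V3 := Set.Icc 0 (fun _ => 2 * π)

/-- Periodicity with period `2π` in each coordinate direction. -/
def Periodic3 {α : Type*} (f : V3 → α) : Prop :=
  ∀ (x : V3) (i : Fin 3), f (x + Pi.single i (2 * π)) = f x

lemma insertNth_eq_add (i : Fin 3) (c : ℝ) (y : Fin 2 → ℝ) :
    (Fin.insertNth i c y : V3) = Fin.insertNth i 0 y + Pi.single i c := by
  funext k
  refine i.succAboveCases ?_ ?_ k
  · simp
  · intro j
    simp [Fin.succAbove_ne i j, Pi.single_eq_of_ne (Fin.succAbove_ne i j)]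

lemma T3_eq : T3 = Set.Icc (0 : V3) (fun _ => 2 * π) := rfl

lemma integral_pd_zero (g : V3 → ℝ) (hg : ContDiff ℝ ∞ g) (hper : Periodic3 g) (i : Fin 3) :
    ∫ x in T3, pd i g x = 0 := by
  have hgd : Differentiable ℝ g := hg.differentiable (by simp)
  set a : V3 := 0 with ha
  set b : V3 := fun _ => 2 * π with hb
  have hle : a ≤ b := fun j => by positivity
  set f : V3 → V3 := fun x => Pi.single i (g x) with hf
  set f' : V3 → V3 →L[ℝ] V3 :=
    fun x => ContinuousLinearMap.pi (fun j => if j = i then fderiv ℝ g x else 0) with hf'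
  have hfc : Continuous f := by
    apply continuous_pi
    intro j
    rcases eq_or_ne j i with rfl | hne
    · simp only [hf, Pi.single_eq_same]
      exact hg.continuous
    · simp only [hf, Pi.single_eq_of_ne hne]
      exact continuous_const
  have hfd : ∀ x, HasFDerivAt f (f' x) x := by
    intro x
    rw [hasFDerivAt_pi']
    intro j
    rcases eq_or_ne j i with rfl | hne
    · have : (fun x => f x j) = g := by
        funext y; simp [hf]
      rw [this]
      have : (ContinuousLinearMap.proj j).comp (f' x) = fderiv ℝ g x := by
        ext v; simp [hf']
      rw [this]
      exact (hgd x).hasFDerivAt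
    · have h1 : (fun x => f x j) = fun _ => (0:ℝ) := by
        funext y; simp [hf, Pi.single_eq_of_ne hne]
      have h2 : (ContinuousLinearMap.proj j).comp (f' x) = 0 := by
        ext v; simp [hf', hne]
      rw [h1, h2]
      exact hasFDerivAt_const _ _
  have hdiv : ∀ x, (∑ j, f' x (Pi.single j 1) j) = pd i g x := by
    intro x
    have : ∀ j, f' x (Pi.single j 1) j = if j = i then fderiv ℝ g x (Pi.single j 1) else 0 := by
      intro j; by_cases hj : j = i <;> simp [hf', hj]
    simp only [this]
    simp [pd]
  have hpdc : Continuous (pd i g) := by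
    have := (hg.fderiv_right (m := ∞) (by simp)).continuous
    exact (this.clm_apply continuous_const :)
  have Hi : IntegrableOn (fun x => ∑ j, f' x (Pi.single j 1) j) (Set.Icc a b) := by
    apply Continuous.integrableOn_Icc
    simp only [hdiv]
    exact hpdc
  have key := MeasureTheory.integral_divergence_of_hasFDerivAt_off_countable
    (n := 2) (a := a) (b := b) hle f f' ∅ Set.countable_empty hfc.continuousOn
    (fun x _ => hfd x) Hi
  have hfaces : ∀ j : Fin 3,
      ((∫ x in Set.Icc (a ∘ j.succAbove) (b ∘ j.succAbove), f (j.insertNth (b j) x) j)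
        - ∫ x in Set.Icc (a ∘ j.succAbove) (b ∘ j.succAbove), f (j.insertNth (a j) x) j) = 0 := by
    intro j
    rcases eq_or_ne j i with rfl | hne
    · have : ∀ y : Fin 2 → ℝ, f (j.insertNth (b j) y) j = f (j.insertNth (a j) y) j := by
        intro y
        have hb' : (j.insertNth (b j) y : V3) = j.insertNth (a j) y + Pi.single j (2 * π) := by
          rw [insertNth_eq_add, insertNth_eq_add]
          simp [ha, hb]
        simp only [hf, Pi.single_eq_same, hb']
        exact hper _ j
      rw [show (fun y : Fin 2 → ℝ => f (j.insertNth (b j) y) j)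
          = (fun y => f (j.insertNth (a j) y) j) from funext this]
      exact sub_self _
    · simp [hf, Pi.single_eq_of_ne hne]
  rw [← funext hdiv] at *
  rw [T3_eq, key, Finset.sum_congr rfl (fun j _ => hfaces j), Finset.sum_const, smul_zero]

section PdCalc
variable {f g : V3 → ℝ} {x : V3} {i : Fin 3}

lemma pd_add (hf : DifferentiableAt ℝ f x) (hg : DifferentiableAt ℝ g x) :
    pd i (fun y => f y + g y) x = pd i f x + pd i g x := by
  simp [pd, fderiv_fun_add hf hg]

lemma pd_mul (hf : DifferentiableAt ℝ f x) (hg : DifferentiableAt ℝ g x) :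
    pd i (fun y => f y * g y) x = pd i f x * g x + f x * pd i g x := by
  simp [pd, fderiv_fun_mul hf hg]; ring

lemma pd_neg : pd i (fun y => -f y) x = -pd i f x := by
  simp [pd, fderiv_neg]

lemma pd_sub (hf : DifferentiableAt ℝ f x) (hg : DifferentiableAt ℝ g x) :
    pd i (fun y => f y - g y) x = pd i f x - pd i g x := by
  simp [pd, fderiv_fun_sub hf hg]

lemma pd_const_mul (c : ℝ) (hf : DifferentiableAt ℝ f x) :
    pd i (fun y => c * f y) x = c * pd i f x := by
  simp [pd, fderiv_const_mul hf]

lemma pd_congr (h : f = g) : pd i f x = pd i g x := by rw [h]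

end PdCalc

section Per
variable {f g : V3 → ℝ}

lemma Periodic3.pdp (hf : Differentiable ℝ f) (hp : Periodic3 f) (i : Fin 3) :
    Periodic3 (pd i f) := by
  intro x j
  have h1 : HasFDerivAt (fun y : V3 => y + Pi.single j (2 * π))
      (ContinuousLinearMap.id ℝ V3) x := (hasFDerivAt_id x).add_const _
  have h2 := (hf (x + Pi.single j (2 * π))).hasFDerivAt.comp x h1
  have h3 : (f ∘ fun y => y + Pi.single j (2 * π)) = f := funext fun y => hp y j
  rw [h3] at h2
  have h4 := h2.fderiv
  simp only [pd, h4]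
  simp

lemma Periodic3.addp (hf : Periodic3 f) (hg : Periodic3 g) :
    Periodic3 (fun y => f y + g y) := fun x j => by simp [hf x j, hg x j]

lemma Periodic3.mulp (hf : Periodic3 f) (hg : Periodic3 g) :
    Periodic3 (fun y => f y * g y) := fun x j => by simp [hf x j, hg x j]

lemma Periodic3.negp (hf : Periodic3 f) : Periodic3 (fun y => -f y) :=
  fun x j => by simp [hf x j]

lemma Periodic3.subp (hf : Periodic3 f) (hg : Periodic3 g) :
    Periodic3 (fun y => f y - g y) := fun x j => by simp [hf x j, hg x j]

lemma Periodic3.const_mulp (c : ℝ) (hf : Periodic3 f) :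
    Periodic3 (fun y => c * f y) := fun x j => by simp [hf x j]

lemma Periodic3.invp (hf : Periodic3 f) : Periodic3 (fun y => (f y)⁻¹) :=
  fun x j => by simp [hf x j]

lemma Periodic3.compp {α β : Type*} (φ : α → β) {u : V3 → α} (hu : Periodic3 u) :
    Periodic3 (fun y => φ (u y)) := fun x j => by simp [hu x j]

lemma Periodic3.applyp {u : V3 → V3} (hu : Periodic3 u) (i : Fin 3) :
    Periodic3 (fun y => u y i) := fun x j => by simp [hu x j]

end Per

def Good (f : V3 → ℝ) : Prop := ContDiff ℝ ∞ f ∧ Periodic3 f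
def GoodV (u : V3 → V3) : Prop := ∀ i, Good (fun y => u y i)

namespace Good

variable {f g : V3 → ℝ} {u w : V3 → V3} {i : Fin 3}

lemma sm (hf : Good f) : ContDiff ℝ ∞ f := hf.1
lemma per (hf : Good f) : Periodic3 f := hf.2
lemma diff (hf : Good f) : Differentiable ℝ f := hf.1.differentiable (by simp)
lemma cont (hf : Good f) : Continuous f := hf.1.continuous

lemma pdg (hf : Good f) : Good (pd i f) := by
  constructor
  · exact (hf.1.fderiv_right (by simp)).clm_apply contDiff_const
  · exact hf.2.pdp hf.diff i

lemma add (hf : Good f) (hg : Good g) : Good (fun y => f y + g y) :=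
  ⟨hf.1.add hg.1, hf.2.addp hg.2⟩
lemma mul (hf : Good f) (hg : Good g) : Good (fun y => f y * g y) :=
  ⟨hf.1.mul hg.1, hf.2.mulp hg.2⟩
lemma neg (hf : Good f) : Good (fun y => -f y) := ⟨hf.1.neg, hf.2.negp⟩
lemma sub (hf : Good f) (hg : Good g) : Good (fun y => f y - g y) :=
  ⟨hf.1.sub hg.1, hf.2.subp hg.2⟩
lemma const_mul (c : ℝ) (hf : Good f) : Good (fun y => c * f y) :=
  ⟨contDiff_const.mul hf.1, hf.2.const_mulp c⟩
lemma const (c : ℝ) : Good (fun _ => c) := ⟨contDiff_const, fun x j => rfl⟩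
lemma inv (hf : Good f) (h0 : ∀ x, f x ≠ 0) : Good (fun y => (f y)⁻¹) :=
  ⟨hf.1.inv h0, hf.2.invp⟩
lemma div_const (hf : Good f) (c : ℝ) : Good (fun y => f y / c) := by
  simpa [div_eq_mul_inv, mul_comm] using hf.const_mul c⁻¹

end Good

namespace GoodV

variable {f : V3 → ℝ} {u w : V3 → V3}

lemma curlg (hu : GoodV u) : GoodV (curl u) := by
  intro i
  fin_cases i <;>
    simp only [curl, Matrix.cons_val_zero, Matrix.cons_val_one, Matrix.head_cons,
      Matrix.cons_val_two, Matrix.tail_cons, Fin.isValue] <;>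
  · exact Good.sub (Good.pdg (by exact hu _)) (Good.pdg (by exact hu _))

lemma crossg (hu : GoodV u) (hw : GoodV w) : GoodV (fun y => cross (u y) (w y)) := by
  intro i
  fin_cases i <;>
    simp only [cross, Matrix.cons_val_zero, Matrix.cons_val_one, Matrix.head_cons,
      Matrix.cons_val_two, Matrix.tail_cons, Fin.isValue] <;>
  · exact Good.sub (Good.mul (by exact hu _) (by exact hw _))
      (Good.mul (by exact hu _) (by exact hw _))

lemma smulg (hf : Good f) (hu : GoodV u) : GoodV (fun y => f y • u y) := by
  intro i
  simp only [Pi.smul_apply, smul_eq_mul]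
  exact hf.mul (hu i)

end GoodV

section Algebra
variable (a b c d e' : V3) (s : ℝ)

lemma dot_add_left : dot (a + b) c = dot a c + dot b c := by
  simp [dot, add_mul, Finset.sum_add_distrib]
lemma dot_sub_left : dot (a - b) c = dot a c - dot b c := by
  simp [dot, sub_mul, Finset.sum_sub_distrib]
lemma dot_neg_left : dot (-a) b = -dot a b := by
  simp [dot, Finset.sum_neg_distrib]
lemma dot_smul_left : dot (s • a) b = s * dot a b := by
  simp [dot, Finset.mul_sum, mul_assoc]
lemma dot_add_right : dot a (b + c) = dot a b + dot a c := by
  simp [dot, mul_add, Finset.sum_add_distrib]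
lemma dot_smul_right : dot a (s • b) = s * dot a b := by
  simp only [dot, Pi.smul_apply, smul_eq_mul, Finset.mul_sum]
  exact Finset.sum_congr rfl fun i _ => by ring
lemma tripA : dot (cross a b) b = 0 := by
  simp [dot, cross, Fin.sum_univ_three]; ring
lemma tripB : dot a (cross b a) = 0 := by
  simp [dot, cross, Fin.sum_univ_three]; ring
lemma tripC : dot a (cross b c) = dot (cross a b) c := by
  simp [dot, cross, Fin.sum_univ_three]; ring

end Algebra

section Pointwise

lemma grad_pairing (Φ : V3 → ℝ) (bs : V3 → V3) (x : V3)
    (hΦ : DifferentiableAt ℝ Φ x) (hbs : ∀ k, DifferentiableAt ℝ (fun y => bs y k) x) :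
    ∑ i, pd i (fun y => Φ y * bs y i) x = dot (grad Φ x) (bs x) + Φ x * vdiv bs x := by
  have : ∀ i : Fin 3, pd i (fun y => Φ y * bs y i) x
      = pd i Φ x * bs x i + Φ x * pd i (fun y => bs y i) x :=
    fun i => pd_mul hΦ (hbs i)
  simp only [this, dot, grad, vdiv, Finset.sum_add_distrib, Finset.mul_sum]

lemma curl_pairing (u w : V3 → V3) (x : V3)
    (hu : ∀ k, DifferentiableAt ℝ (fun y => u y k) x)
    (hw : ∀ k, DifferentiableAt ℝ (fun y => w y k) x) :
    dot (u x) (curl w x) = dot (curl u x) (w x)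
      - ∑ i, pd i (fun y => cross (u y) (w y) i) x := by
  have e : ∀ i j k : Fin 3, pd i (fun y => u y j * w y k - u y k * w y j) x
      = pd i (fun y => u y j) x * w x k + u x j * pd i (fun y => w y k) x
        - (pd i (fun y => u y k) x * w x j + u x k * pd i (fun y => w y j) x) := by
    intro i j k
    rw [pd_sub ((hu j).fun_mul (hw k)) ((hu k).fun_mul (hw j)), pd_mul (hu j) (hw k),
      pd_mul (hu k) (hw j)]
  simp only [dot, cross, curl, Fin.sum_univ_three, Matrix.cons_val_zero, Matrix.cons_val_one,
    Matrix.head_cons, Matrix.cons_val_two, Matrix.tail_cons, Fin.isValue, e]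
  ring

end Pointwise

lemma integral_divsum_zero (G : Fin 3 → V3 → ℝ) (hG : ∀ i, Good (G i)) :
    ∫ x in T3, (∑ i, pd i (G i) x) = 0 := by
  rw [integral_finset_sum]
  · exact Finset.sum_eq_zero fun i _ => integral_pd_zero (G i) (hG i).sm (hG i).per i
  · intro i _
    have : Continuous (pd i (G i)) := ((hG i).pdg).cont
    exact this.integrableOn_Icc

lemma main_spatial (de2 : ℝ) (r : V3 → ℝ) (hr : Good r) (hr0 : ∀ x, r x ≠ 0)
    (v b bs : V3 → V3) (hv : GoodV v) (hb : GoodV b) (hbs : GoodV bs)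
    (Φ ψ : V3 → ℝ) (hΦ : Good Φ) (hψ : Good ψ)
    (hdiv : ∀ x, vdiv bs x = 0) :
    ∫ x in T3,
      (dot (-cross (curl v x) (v x) - grad Φ x + (r x)⁻¹ • cross (curl b x) (bs x)
          - de2 • grad ψ x) (bs x)
        + dot (v x) (curl (fun y => cross (v y) (bs y)) x
          + de2 • curl (fun y => (r y)⁻¹ • cross (curl b y) (curl v y)) x)) = 0 := by
  have hP : GoodV (fun y => cross (v y) (bs y)) := hv.crossg hbs
  have hW : GoodV (fun y => (r y)⁻¹ • cross (curl b y) (curl v y)) :=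
    GoodV.smulg (hr.inv hr0) ((hb.curlg).crossg (hv.curlg))
  set G : Fin 3 → V3 → ℝ := fun i y =>
    -(Φ y * bs y i) - de2 * (ψ y * bs y i) - cross (v y) (cross (v y) (bs y)) i
      - de2 * cross (v y) ((r y)⁻¹ • cross (curl b y) (curl v y)) i with hGdef
  have hG : ∀ i, Good (G i) := by
    intro i
    exact Good.sub (Good.sub (Good.sub (Good.neg (hΦ.mul (hbs i)))
      (Good.const_mul de2 (hψ.mul (hbs i)))) (hv.crossg hP i))
      (Good.const_mul de2 (hv.crossg hW i))
  have hpoint : ∀ x,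
      (dot (-cross (curl v x) (v x) - grad Φ x + (r x)⁻¹ • cross (curl b x) (bs x)
          - de2 • grad ψ x) (bs x)
        + dot (v x) (curl (fun y => cross (v y) (bs y)) x
          + de2 • curl (fun y => (r y)⁻¹ • cross (curl b y) (curl v y)) x))
      = ∑ i, pd i (G i) x := by
    intro x
    have e1 : ∑ i, pd i (fun y => Φ y * bs y i) x = dot (grad Φ x) (bs x) := by
      rw [grad_pairing Φ bs x (hΦ.diff x) (fun k => (hbs k).diff x), hdiv x, mul_zero, add_zero]
    have e2 : ∑ i, pd i (fun y => ψ y * bs y i) x = dot (grad ψ x) (bs x) := by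
      rw [grad_pairing ψ bs x (hψ.diff x) (fun k => (hbs k).diff x), hdiv x, mul_zero, add_zero]
    have e3 := curl_pairing v (fun y => cross (v y) (bs y)) x
      (fun k => (hv k).diff x) (fun k => (hP k).diff x)
    have e4 := curl_pairing v (fun y => (r y)⁻¹ • cross (curl b y) (curl v y)) x
      (fun k => (hv k).diff x) (fun k => (hW k).diff x)
    have expand : ∀ i : Fin 3, pd i (G i) x
        = -(pd i (fun y => Φ y * bs y i) x) - de2 * pd i (fun y => ψ y * bs y i) x
          - pd i (fun y => cross (v y) (cross (v y) (bs y)) i) x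
          - de2 * pd i (fun y => cross (v y) ((r y)⁻¹ • cross (curl b y) (curl v y)) i) x := by
      intro i
      have d1 : DifferentiableAt ℝ (fun y => Φ y * bs y i) x := ((hΦ.mul (hbs i)).diff x)
      have d2 : DifferentiableAt ℝ (fun y => ψ y * bs y i) x := ((hψ.mul (hbs i)).diff x)
      have d3 : DifferentiableAt ℝ (fun y => cross (v y) (cross (v y) (bs y)) i) x :=
        ((hv.crossg hP i).diff x)
      have d4 : DifferentiableAt ℝ
          (fun y => cross (v y) ((r y)⁻¹ • cross (curl b y) (curl v y)) i) x :=
        ((hv.crossg hW i).diff x)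
      rw [hGdef]
      rw [pd_sub ((d1.fun_neg.fun_sub (d2.const_mul de2)).fun_sub d3) (d4.const_mul de2),
        pd_sub (d1.fun_neg.fun_sub (d2.const_mul de2)) d3,
        pd_sub d1.fun_neg (d2.const_mul de2), pd_neg, pd_const_mul de2 d2, pd_const_mul de2 d4]
    rw [dot_sub_left, dot_add_left, dot_sub_left, dot_neg_left, dot_smul_left, dot_smul_left,
      dot_add_right, dot_smul_right, tripA, e3, e4]
    simp only [expand]
    rw [tripC, dot_smul_right, tripB]
    simp only [Finset.sum_sub_distrib, ← Finset.mul_sum, Finset.sum_neg_distrib, e1, e2]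
    ring
  rw [show (fun x => (dot (-cross (curl v x) (v x) - grad Φ x
      + (r x)⁻¹ • cross (curl b x) (bs x) - de2 • grad ψ x) (bs x)
      + dot (v x) (curl (fun y => cross (v y) (bs y)) x
        + de2 • curl (fun y => (r y)⁻¹ • cross (curl b y) (curl v y)) x)))
    = fun x => ∑ i, pd i (G i) x from funext hpoint]
  exact integral_divsum_zero G hG

def SmT (f : ℝ → V3 → ℝ) : Prop := ContDiff ℝ ∞ fun q : ℝ × V3 => f q.1 q.2

namespace SmT
variable {f g : ℝ → V3 → ℝ}

lemma pdt (hf : SmT f) (i : Fin 3) : SmT (fun t x => pd i (f t) x) := by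
  have h1 : ContDiff ℝ ∞ (Function.uncurry fun (q : ℝ × V3) (y : V3) => f q.1 y) :=
    hf.comp ((contDiff_fst.comp contDiff_fst).prodMk contDiff_snd)
  have h2 : ContDiff ℝ ∞ (fun q : ℝ × V3 => fderiv ℝ (f q.1) q.2) :=
    h1.fderiv contDiff_snd (by simp)
  exact h2.clm_apply contDiff_const

lemma add (hf : SmT f) (hg : SmT g) : SmT (fun t x => f t x + g t x) := ContDiff.add hf hg
lemma mul (hf : SmT f) (hg : SmT g) : SmT (fun t x => f t x * g t x) := ContDiff.mul hf hg
lemma sub (hf : SmT f) (hg : SmT g) : SmT (fun t x => f t x - g t x) := ContDiff.sub hf hg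
lemma neg (hf : SmT f) : SmT (fun t x => -f t x) := ContDiff.neg hf
lemma const_mul (c : ℝ) (hf : SmT f) : SmT (fun t x => c * f t x) :=
  ContDiff.mul contDiff_const hf
lemma inv (hf : SmT f) (h0 : ∀ t x, f t x ≠ 0) : SmT (fun t x => (f t x)⁻¹) :=
  ContDiff.inv hf (fun q => h0 q.1 q.2)

lemma fix (hf : SmT f) (t : ℝ) : ContDiff ℝ ∞ (f t) := by
  have : ContDiff ℝ ∞ (fun x : V3 => (t, x)) := contDiff_const.prodMk contDiff_id
  exact hf.comp this

end SmT

lemma measurableT3 : MeasurableSet T3 := measurableSet_Icc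

lemma hasDerivAt_integral_T3 (G : ℝ × V3 → ℝ) (hG : ContDiff ℝ ∞ G) (t₀ : ℝ) :
    HasDerivAt (fun t => ∫ x in T3, G (t, x)) (∫ x in T3, fderiv ℝ G (t₀, x) (1, 0)) t₀ := by
  set D : ℝ × V3 → ℝ := fun q => fderiv ℝ G q (1, 0) with hDdef
  have hDc : Continuous D :=
    ((hG.fderiv_right (m := ∞) (by simp)).continuous).clm_apply continuous_const
  have hDer : ∀ (t : ℝ) (x : V3), HasDerivAt (fun s => G (s, x)) (D (t, x)) t := by
    intro t x
    have h1 : HasDerivAt (fun s : ℝ => ((s, x) : ℝ × V3)) (1, 0) t :=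
      (hasDerivAt_id t).prodMk (hasDerivAt_const t x)
    exact ((hG.differentiable (by simp)) (t, x)).hasFDerivAt.comp_hasDerivAt t h1
  -- bound on compact set
  have hK : IsCompact ((Set.Icc (t₀ - 1) (t₀ + 1)) ×ˢ T3) := isCompact_Icc.prod isCompact_Icc
  obtain ⟨C, hC⟩ := hK.exists_bound_of_continuousOn hDc.continuousOn
  have key := hasDerivAt_integral_of_dominated_loc_of_deriv_le (F := fun t x => G (t, x))
    (F' := fun t x => D (t, x)) (μ := volume.restrict T3) (x₀ := t₀)
    (bound := fun _ => C) (s := Metric.ball t₀ 1) (Metric.ball_mem_nhds t₀ one_pos)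
    (Filter.Eventually.of_forall fun t =>
      (hG.continuous.comp (Continuous.prodMk_right t)).aestronglyMeasurable)
    ((hG.continuous.comp (Continuous.prodMk_right t₀)).integrableOn_Icc).integrable
    ((hDc.comp (Continuous.prodMk_right t₀)).aestronglyMeasurable)
    ?_ ?_ ?_
  · exact key.2
  · -- bound
    filter_upwards [MeasureTheory.ae_restrict_mem measurableT3] with x hx
    intro t ht
    have ht' : t ∈ Set.Icc (t₀ - 1) (t₀ + 1) := by
      have := Metric.mem_ball.1 ht
      rw [Real.dist_eq] at this
      constructor <;> [linarith [abs_lt.1 this |>.1]; linarith [abs_lt.1 this |>.2]]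
    exact hC (t, x) ⟨ht', hx⟩
  · exact (MeasureTheory.integrableOn_const (isCompact_Icc.measure_lt_top).ne).integrable
  · filter_upwards with x
    intro t _
    exact hDer t x

lemma Periodic3.curlp {u : V3 → V3} (hu : ∀ k, ContDiff ℝ ∞ (fun y => u y k))
    (hp : Periodic3 u) : Periodic3 (curl u) := by
  intro x j
  have hd : ∀ k : Fin 3, Differentiable ℝ (fun y => u y k) :=
    fun k => (hu k).differentiable (by simp)
  simp only [curl]
  rw [Periodic3.pdp (hd 2) (hp.applyp 2) 1 x j, Periodic3.pdp (hd 1) (hp.applyp 1) 2 x j,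
    Periodic3.pdp (hd 0) (hp.applyp 0) 2 x j, Periodic3.pdp (hd 2) (hp.applyp 2) 0 x j,
    Periodic3.pdp (hd 1) (hp.applyp 1) 0 x j, Periodic3.pdp (hd 0) (hp.applyp 0) 1 x j]

theorem inertial_mhd_cross_helicity_conservation
    (de : ℝ) (hde : 0 ≤ de)
    (T : ℝ) (hT : 0 ≤ T)
    (h : ℝ → ℝ) (hh : ContDiffOn ℝ ∞ h (Set.Ioi 0))
    (ρ : ℝ → V3 → ℝ) (V B : ℝ → V3 → V3)
    (hρ : ContDiff ℝ ∞ (fun q : ℝ × V3 => ρ q.1 q.2))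
    (hV : ContDiff ℝ ∞ (fun q : ℝ × V3 => V q.1 q.2))
    (hB : ContDiff ℝ ∞ (fun q : ℝ × V3 => B q.1 q.2))
    (hρpos : ∀ t x, 0 < ρ t x)
    (hρper : ∀ t, Periodic3 (ρ t)) (hVper : ∀ t, Periodic3 (V t))
    (hBper : ∀ t, Periodic3 (B t))
    (Bs : ℝ → V3 → V3)
    (hBsdef : ∀ t x, Bs t x = B t x + de ^ 2 • curl (fun y => (ρ t y)⁻¹ • curl (B t) y) x)
    (hdivBs : ∀ t x, vdiv (Bs t) x = 0)
    (hmom : ∀ t ∈ Set.Icc 0 T, ∀ x,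
      deriv (fun s => V s x) t =
        -cross (curl (V t) x) (V t x)
        - grad (fun y => h (ρ t y) + dot (V t y) (V t y) / 2) x
        + (ρ t x)⁻¹ • cross (curl (B t) x) (Bs t x)
        - de ^ 2 • grad (fun y =>
            dot (curl (B t) y) (curl (B t) y) / (2 * (ρ t y) ^ 2)) x)
    (hind : ∀ t ∈ Set.Icc 0 T, ∀ x,
      deriv (fun s => Bs s x) t =
        curl (fun y => cross (V t y) (Bs t y)) x
        + de ^ 2 • curl (fun y => (ρ t y)⁻¹ • cross (curl (B t) y) (curl (V t) y)) x) :
    ∀ t ∈ Set.Icc 0 T,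
      (∫ x in T3, dot (V t x) (Bs t x)) = ∫ x in T3, dot (V 0 x) (Bs 0 x) := by
  have hρ0 : ∀ t x, ρ t x ≠ 0 := fun t x => (hρpos t x).ne'
  -- joint smoothness of components
  have hρT : SmT ρ := hρ
  have hVi : ∀ i, SmT (fun t x => V t x i) :=
    fun i => ((ContinuousLinearMap.proj i : V3 →L[ℝ] ℝ).contDiff).comp hV
  have hBi : ∀ i, SmT (fun t x => B t x i) :=
    fun i => ((ContinuousLinearMap.proj i : V3 →L[ℝ] ℝ).contDiff).comp hB
  have hrinv : SmT (fun t x => (ρ t x)⁻¹) := SmT.inv hρT hρ0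
  have hcurlB : ∀ k, SmT (fun t x => curl (B t) x k) := by
    intro k
    fin_cases k <;>
      simp only [curl, Matrix.cons_val_zero, Matrix.cons_val_one, Matrix.head_cons,
        Matrix.cons_val_two, Matrix.tail_cons, Fin.isValue]
    · exact (SmT.pdt (hBi 2) 1).sub (SmT.pdt (hBi 1) 2)
    · exact (SmT.pdt (hBi 0) 2).sub (SmT.pdt (hBi 2) 0)
    · exact (SmT.pdt (hBi 1) 0).sub (SmT.pdt (hBi 0) 1)
  have hui : ∀ k, SmT (fun t y => ((ρ t y)⁻¹ • curl (B t) y) k) := by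
    intro k
    simp only [Pi.smul_apply, smul_eq_mul]
    exact hrinv.mul (hcurlB k)
  have hcurlu : ∀ k, SmT (fun t x => curl (fun y => (ρ t y)⁻¹ • curl (B t) y) x k) := by
    intro k
    fin_cases k <;>
      simp only [curl, Matrix.cons_val_zero, Matrix.cons_val_one, Matrix.head_cons,
        Matrix.cons_val_two, Matrix.tail_cons, Fin.isValue]
    · exact (SmT.pdt (hui 2) 1).sub (SmT.pdt (hui 1) 2)
    · exact (SmT.pdt (hui 0) 2).sub (SmT.pdt (hui 2) 0)
    · exact (SmT.pdt (hui 1) 0).sub (SmT.pdt (hui 0) 1)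
  have hBsi : ∀ i, SmT (fun t x => Bs t x i) := by
    intro i
    have e : (fun t x => Bs t x i)
        = fun t x => B t x i + de ^ 2 * curl (fun y => (ρ t y)⁻¹ • curl (B t) y) x i := by
      funext t x
      rw [hBsdef t x]
      simp
    rw [e]
    exact (hBi i).add (SmT.const_mul (de ^ 2) (hcurlu i))
  have hF : ContDiff ℝ ∞ (fun q : ℝ × V3 => dot (V q.1 q.2) (Bs q.1 q.2)) := by
    simp only [dot]
    exact ContDiff.sum fun i _ => ContDiff.mul (hVi i) (hBsi i)
  have hBsJ : ContDiff ℝ ∞ (fun q : ℝ × V3 => Bs q.1 q.2) := contDiff_pi.2 hBsi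
  -- periodicity of Bs
  have hcurlBper : ∀ t, Periodic3 (curl (B t)) :=
    fun t => Periodic3.curlp (fun k => (hBi k).fix t) (hBper t)
  have huper : ∀ t, Periodic3 (fun y => (ρ t y)⁻¹ • curl (B t) y) := by
    intro t x j
    simp only [hρper t x j, hcurlBper t x j]
  have hBsper : ∀ t, Periodic3 (Bs t) := by
    intro t x j
    rw [hBsdef t _, hBsdef t x, hBper t x j,
      Periodic3.curlp (fun k => (hui k).fix t) (huper t) x j]
  -- Good packages at fixed time
  have gρ : ∀ t, Good (ρ t) := fun t => ⟨hρT.fix t, hρper t⟩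
  have gV : ∀ t, GoodV (V t) := fun t i => ⟨(hVi i).fix t, (hVper t).applyp i⟩
  have gB : ∀ t, GoodV (B t) := fun t i => ⟨(hBi i).fix t, (hBper t).applyp i⟩
  have gBs : ∀ t, GoodV (Bs t) := fun t i => ⟨(hBsi i).fix t, (hBsper t).applyp i⟩
  have gΦ : ∀ t, Good (fun y => h (ρ t y) + dot (V t y) (V t y) / 2) := by
    intro t
    apply Good.add
    · constructor
      · exact hh.comp_contDiff (hρT.fix t) (fun x => hρpos t x)
      · exact Periodic3.compp h (hρper t)
    · apply Good.div_const
      constructor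
      · show ContDiff ℝ ∞ fun y => dot (V t y) (V t y)
        simp only [dot]
        exact ContDiff.sum fun i _ => ContDiff.mul ((hVi i).fix t) ((hVi i).fix t)
      · intro x j
        simp only [hVper t x j]
  have gψ : ∀ t, Good (fun y =>
      dot (curl (B t) y) (curl (B t) y) / (2 * (ρ t y) ^ 2)) := by
    intro t
    constructor
    · apply ContDiff.div
      · show ContDiff ℝ ∞ fun y => dot (curl (B t) y) (curl (B t) y)
        simp only [dot]
        exact ContDiff.sum fun i _ => ContDiff.mul ((hcurlB i).fix t) ((hcurlB i).fix t)
      · exact contDiff_const.mul ((hρT.fix t).pow 2)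
      · intro x
        have := hρpos t x
        positivity
    · intro x j
      simp only [hcurlBper t x j, hρper t x j]
  -- the derivative of the cross-helicity integral vanishes on [0, T]
  set Fq : ℝ × V3 → ℝ := fun q => dot (V q.1 q.2) (Bs q.1 q.2) with hFqdef
  have hDer0 : ∀ t₁ ∈ Set.Icc 0 T, (∫ x in T3, fderiv ℝ Fq (t₁, x) (1, 0)) = 0 := by
    intro t₁ ht₁
    have hptw : ∀ x, fderiv ℝ Fq (t₁, x) (1, 0)
        = dot (-cross (curl (V t₁) x) (V t₁ x)
            - grad (fun y => h (ρ t₁ y) + dot (V t₁ y) (V t₁ y) / 2) x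
            + (ρ t₁ x)⁻¹ • cross (curl (B t₁) x) (Bs t₁ x)
            - de ^ 2 • grad (fun y =>
                dot (curl (B t₁) y) (curl (B t₁) y) / (2 * (ρ t₁ y) ^ 2)) x) (Bs t₁ x)
          + dot (V t₁ x) (curl (fun y => cross (V t₁ y) (Bs t₁ y)) x
            + de ^ 2 • curl (fun y => (ρ t₁ y)⁻¹ • cross (curl (B t₁) y) (curl (V t₁) y)) x) := by
      intro x
      have hcurve : HasDerivAt (fun s : ℝ => ((s, x) : ℝ × V3)) (1, 0) t₁ :=
        (hasDerivAt_id t₁).prodMk (hasDerivAt_const t₁ x)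
      have h1 : HasDerivAt (fun s => Fq (s, x)) (fderiv ℝ Fq (t₁, x) (1, 0)) t₁ :=
        by have := ((hF.differentiable (by simp)) (t₁, x)).hasFDerivAt.comp_hasDerivAt t₁ hcurve; exact this
      have hVd : HasDerivAt (fun s => V s x) (deriv (fun s => V s x) t₁) t₁ := by
        have : DifferentiableAt ℝ (fun s => V s x) t₁ :=
          ((hV.differentiable (by simp)).comp
            (differentiable_id.prodMk (differentiable_const x))).differentiableAt
        exact this.hasDerivAt
      have hBd : HasDerivAt (fun s => Bs s x) (deriv (fun s => Bs s x) t₁) t₁ := by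
        have : DifferentiableAt ℝ (fun s => Bs s x) t₁ :=
          ((hBsJ.differentiable (by simp)).comp
            (differentiable_id.prodMk (differentiable_const x))).differentiableAt
        exact this.hasDerivAt
      have hcomp : ∀ (u : ℝ → V3) (u' : V3), HasDerivAt u u' t₁ →
          ∀ i : Fin 3, HasDerivAt (fun s => u s i) (u' i) t₁ :=
        fun u u' hu i =>
          ((ContinuousLinearMap.proj i : V3 →L[ℝ] ℝ).hasFDerivAt).comp_hasDerivAt t₁ hu
      have h2 : HasDerivAt (fun s => Fq (s, x))
          (dot (deriv (fun s => V s x) t₁) (Bs t₁ x)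
            + dot (V t₁ x) (deriv (fun s => Bs s x) t₁)) t₁ := by
        have hsum : HasDerivAt (fun s => ∑ i, V s x i * Bs s x i)
            (∑ i, (deriv (fun s => V s x) t₁ i * Bs t₁ x i
              + V t₁ x i * deriv (fun s => Bs s x) t₁ i)) t₁ :=
          HasDerivAt.fun_sum (fun i _ => (hcomp _ _ hVd i).mul (hcomp _ _ hBd i))
        have e : (dot (deriv (fun s => V s x) t₁) (Bs t₁ x)
            + dot (V t₁ x) (deriv (fun s => Bs s x) t₁))
            = ∑ i, (deriv (fun s => V s x) t₁ i * Bs t₁ x i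
              + V t₁ x i * deriv (fun s => Bs s x) t₁ i) := by
          simp [dot, Finset.sum_add_distrib]
        rw [e]
        exact hsum
      rw [h1.unique h2, hmom t₁ ht₁ x, hind t₁ ht₁ x]
    rw [show (fun x => fderiv ℝ Fq (t₁, x) (1, 0))
        = fun x => dot (-cross (curl (V t₁) x) (V t₁ x)
            - grad (fun y => h (ρ t₁ y) + dot (V t₁ y) (V t₁ y) / 2) x
            + (ρ t₁ x)⁻¹ • cross (curl (B t₁) x) (Bs t₁ x)
            - de ^ 2 • grad (fun y =>
                dot (curl (B t₁) y) (curl (B t₁) y) / (2 * (ρ t₁ y) ^ 2)) x) (Bs t₁ x)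
          + dot (V t₁ x) (curl (fun y => cross (V t₁ y) (Bs t₁ y)) x
            + de ^ 2 • curl (fun y => (ρ t₁ y)⁻¹ • cross (curl (B t₁) y) (curl (V t₁) y)) x)
      from funext hptw]
    exact main_spatial (de ^ 2) (ρ t₁) (gρ t₁) (hρ0 t₁) (V t₁) (B t₁) (Bs t₁)
      (gV t₁) (gB t₁) (gBs t₁) _ _ (gΦ t₁) (gψ t₁) (hdivBs t₁)
  have hIderiv : ∀ t₁ : ℝ, HasDerivAt (fun t => ∫ x in T3, dot (V t x) (Bs t x))
      (∫ x in T3, fderiv ℝ Fq (t₁, x) (1, 0)) t₁ :=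
    fun t₁ => hasDerivAt_integral_T3 Fq hF t₁
  have hI0 : ∀ t₁ ∈ Set.Icc 0 T,
      HasDerivAt (fun t => ∫ x in T3, dot (V t x) (Bs t x)) 0 t₁ := by
    intro t₁ ht₁
    have := hIderiv t₁
    rwa [hDer0 t₁ ht₁] at this
  intro t ht
  exact constant_of_has_deriv_right_zero
    (fun t₁ ht₁ => (hIderiv t₁).continuousAt.continuousWithinAt)
    (fun t₁ ht₁ => (hI0 t₁ ⟨ht₁.1, ht₁.2.le⟩).hasDerivWithinAt) t ht

end
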